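/- arXiv:2301.10637 — 9 statements merged into one kernel-verified Lean document; each statement's English description precedes it below -/
import Mathlib

section
/- Let f(x) = max_{j∈[N]} log(Σ_{a∈A_j} f_{a,j} exp(aᵀx)), where each A_j ⊂ ℝⁿ is a nonempty finite set and each coefficient f_{a,j} > 0. Then the sublevel set {x : f(x) ≤ t} is compact for all t ∈ ℝ if and only if the only x ∈ ℝⁿ satisfying aᵀx ≤ 0 for all a ∈ A_j and all j ∈ [N] is x = 0. -/
set_option maxHeartbeats 1000000

theorem stmt0 {n N : ℕ} (hN : 1 ≤ N)
    (A : Fin N → Finset (Fin n → ℝ)) (hA : ∀ j, (A j).Nonempty)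
    (c : Fin N → (Fin n → ℝ) → ℝ) (hc : ∀ j, ∀ a ∈ A j, 0 < c j a)
    (f : (Fin n → ℝ) → ℝ)
    (hf : ∀ x, IsGreatest
      {t | ∃ j : Fin N,
        t = Real.log (∑ a ∈ A j, c j a * Real.exp (∑ i, a i * x i))} (f x)) :
    (∀ t : ℝ, IsCompact {x | f x ≤ t}) ↔
      ∀ x : Fin n → ℝ, (∀ j : Fin N, ∀ a ∈ A j, (∑ i, a i * x i) ≤ 0) → x = 0 := by
  set F : Fin N → (Fin n → ℝ) → ℝ :=
    fun j x => ∑ a ∈ A j, c j a * Real.exp (∑ i, a i * x i) with hFdef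
  have hFpos : ∀ j x, 0 < F j x := fun j x =>
    Finset.sum_pos (fun a ha => mul_pos (hc j a ha) (Real.exp_pos _)) (hA j)
  have hfub : ∀ x j, Real.log (F j x) ≤ f x := fun x j => (hf x).2 ⟨j, rfl⟩
  have hfmem : ∀ x, ∃ j, f x = Real.log (F j x) := fun x => (hf x).1
  constructor
  · -- compact sublevel sets → trivial recession cone
    intro hcpt x hx
    by_contra hx0
    have hxn : (0:ℝ) < ‖x‖ := norm_pos_iff.2 hx0
    obtain ⟨C, hC⟩ := isBounded_iff_forall_norm_le.1 (hcpt (f 0)).isBounded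
    have hC0 : (0:ℝ) ≤ C := by
      have := hC 0 (by simp)
      simpa using this
    set k : ℝ := (C + 1) / ‖x‖ with hk
    have hk0 : 0 ≤ k := div_nonneg (by linarith) hxn.le
    have hmem : k • x ∈ {y | f y ≤ f 0} := by
      obtain ⟨j, hj⟩ := hfmem (k • x)
      have hle : F j (k • x) ≤ F j 0 := by
        apply Finset.sum_le_sum
        intro a ha
        have h1 : (∑ i, a i * (k • x) i) ≤ ∑ i, a i * (0:Fin n → ℝ) i := by
          have : (∑ i, a i * (k • x) i) = k * ∑ i, a i * x i := by
            simp [Finset.mul_sum]; ring_nf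
            exact Finset.sum_congr rfl fun i _ => by ring
          rw [this]
          simp only [Pi.zero_apply, mul_zero, Finset.sum_const_zero]
          exact mul_nonpos_of_nonneg_of_nonpos hk0 (hx j a ha)
        exact mul_le_mul_of_nonneg_left (Real.exp_le_exp.2 h1) (hc j a ha).le
      have : f (k • x) ≤ Real.log (F j 0) := by
        rw [hj]
        exact Real.log_le_log (hFpos j _) hle
      exact le_trans this (hfub 0 j)
    have := hC _ hmem
    have hnorm : ‖k • x‖ = C + 1 := by
      rw [norm_smul, Real.norm_eq_abs, abs_of_nonneg hk0, hk,
        div_mul_cancel₀ _ hxn.ne']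
    rw [hnorm] at this
    linarith
  · -- trivial recession cone → compact sublevel sets
    intro hker t
    have hFc : ∀ j, Continuous (F j) := by
      intro j
      apply continuous_finset_sum
      intro a _
      exact continuous_const.mul (Real.continuous_exp.comp
        (continuous_finset_sum _ fun i _ => continuous_const.mul (continuous_apply i)))
    have hset : {x | f x ≤ t} = ⋂ j, F j ⁻¹' Set.Iic (Real.exp t) := by
      ext x
      simp only [Set.mem_setOf_eq, Set.mem_iInter, Set.mem_preimage, Set.mem_Iic]
      constructor
      · intro h j
        exact (Real.log_le_iff_le_exp (hFpos j x)).1 (le_trans (hfub x j) h)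
      · intro h
        obtain ⟨j, hj⟩ := hfmem x
        rw [hj]
        exact (Real.log_le_iff_le_exp (hFpos j x)).2 (h j)
    have hclosed : IsClosed {x | f x ≤ t} := by
      rw [hset]
      exact isClosed_iInter fun j => (isClosed_Iic).preimage (hFc j)
    -- the union of all A j
    set B : Finset (Fin n → ℝ) := Finset.univ.biUnion A with hBdef
    have j0 : Fin N := ⟨0, hN⟩
    have hB : B.Nonempty := by
      obtain ⟨a, ha⟩ := hA j0
      exact ⟨a, Finset.mem_biUnion.2 ⟨j0, Finset.mem_univ _, ha⟩⟩
    -- uniform positivity on the sphere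
    have hsphere : ∃ ε > (0:ℝ), ∀ u : Fin n → ℝ, ‖u‖ = 1 →
        ∃ a ∈ B, ε ≤ ∑ i, a i * u i := by
      rcases (Metric.sphere (0:Fin n → ℝ) 1).eq_empty_or_nonempty with hemp | hne
      · refine ⟨1, one_pos, fun u hu => absurd ?_ (Set.eq_empty_iff_forall_notMem.1 hemp u)⟩
        simpa [Metric.mem_sphere, dist_zero_right] using hu
      · set g : (Fin n → ℝ) → ℝ := fun u => B.sup' hB (fun a => ∑ i, a i * u i) with hg
        have hgc : Continuous g :=
          Continuous.finset_sup'_apply hB fun a _ =>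
            continuous_finset_sum _ fun i _ => continuous_const.mul (continuous_apply i)
        obtain ⟨u0, hu0mem, hu0min⟩ :=
          (isCompact_sphere (0:Fin n → ℝ) 1).exists_isMinOn hne hgc.continuousOn
        have hu0 : u0 ≠ 0 := by
          intro h
          rw [h] at hu0mem
          simp at hu0mem
        have hpos : 0 < g u0 := by
          by_contra hle
          push_neg at hle
          apply hu0
          apply hker
          intro j a ha
          calc (∑ i, a i * u0 i) ≤ g u0 :=
                Finset.le_sup' (f := fun a => ∑ i, a i * u0 i)
                  (Finset.mem_biUnion.2 ⟨j, Finset.mem_univ _, ha⟩)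
            _ ≤ 0 := hle
        refine ⟨g u0, hpos, fun u hu => ?_⟩
        obtain ⟨a, ha, hval⟩ := Finset.exists_mem_eq_sup' hB (fun a => ∑ i, a i * u i)
        refine ⟨a, ha, ?_⟩
        have : g u0 ≤ g u := hu0min (by simpa [Metric.mem_sphere, dist_zero_right] using hu)
        rw [← hval]
        exact this
      -- min of the coefficients
    obtain ⟨ε, hε, hεkey⟩ := hsphere
    set P : Finset ((_ : Fin N) × (Fin n → ℝ)) := Finset.univ.sigma A with hPdef
    have hP : P.Nonempty := by
      obtain ⟨a, ha⟩ := hA j0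
      exact ⟨⟨j0, a⟩, Finset.mem_sigma.2 ⟨Finset.mem_univ _, ha⟩⟩
    set m : ℝ := P.inf' hP (fun p => c p.1 p.2) with hm
    have hmpos : 0 < m := by
      rw [hm, Finset.lt_inf'_iff]
      intro p hp
      exact hc p.1 p.2 (Finset.mem_sigma.1 hp).2
    have hmle : ∀ j, ∀ a ∈ A j, m ≤ c j a := fun j a ha =>
      Finset.inf'_le (fun p => c p.1 p.2)
        (show (⟨j, a⟩ : (_ : Fin N) × (Fin n → ℝ)) ∈ P from
          Finset.mem_sigma.2 ⟨Finset.mem_univ _, ha⟩)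
    have hbdd : Bornology.IsBounded {x | f x ≤ t} := by
      rw [isBounded_iff_forall_norm_le]
      refine ⟨max 0 ((t - Real.log m) / ε), fun x hx => ?_⟩
      rcases eq_or_ne x 0 with rfl | hx0
      · simp
      · have hxn : (0:ℝ) < ‖x‖ := norm_pos_iff.2 hx0
        obtain ⟨a, haB, hau⟩ := hεkey (‖x‖⁻¹ • x) (norm_smul_inv_norm (𝕜 := ℝ) hx0)
        obtain ⟨j, _, ha⟩ := Finset.mem_biUnion.1 haB
        have hax : ε * ‖x‖ ≤ ∑ i, a i * x i := by
          have h1 : (∑ i, a i * (‖x‖⁻¹ • x) i) = ‖x‖⁻¹ * ∑ i, a i * x i := by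
            rw [Finset.mul_sum]
            exact Finset.sum_congr rfl fun i _ => by
              simp [Pi.smul_apply, smul_eq_mul]; ring
          rw [h1] at hau
          calc ε * ‖x‖ ≤ (‖x‖⁻¹ * ∑ i, a i * x i) * ‖x‖ :=
                mul_le_mul_of_nonneg_right hau hxn.le
            _ = ∑ i, a i * x i := by field_simp
        have hterm : c j a * Real.exp (∑ i, a i * x i) ≤ F j x :=
          Finset.single_le_sum (f := fun b => c j b * Real.exp (∑ i, b i * x i))
            (fun b hb => (mul_pos (hc j b hb) (Real.exp_pos _)).le) ha
        have hlog : Real.log m + ε * ‖x‖ ≤ f x := by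
          have h2 : Real.log (c j a * Real.exp (∑ i, a i * x i)) ≤ Real.log (F j x) :=
            Real.log_le_log (mul_pos (hc j a ha) (Real.exp_pos _)) hterm
          rw [Real.log_mul (hc j a ha).ne' (Real.exp_pos _).ne', Real.log_exp] at h2
          have h3 : Real.log m + ε * ‖x‖ ≤ Real.log (c j a) + ∑ i, a i * x i :=
            add_le_add (Real.log_le_log hmpos (hmle j a ha)) hax
          exact le_trans h3 (le_trans h2 (hfub x j))
        have : ε * ‖x‖ ≤ t - Real.log m := by
          have := le_trans hlog hx
          linarith
        have : ‖x‖ ≤ (t - Real.log m) / ε := (le_div_iff₀ hε).2 (by linarith [this])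
        exact le_trans this (le_max_right _ _)
    exact Metric.isCompact_of_isClosed_isBounded hclosed hbdd
end

section
/- Let f(x) = max_{j∈[N]} log(Σ_{a∈A_j} f_{a,j} exp(aᵀx)) with finite sets A_j ⊂ ℝⁿ and positive coefficients. Then f is coercive (all sublevel sets compact) if and only if the convex hull of ∪_j A_j contains a neighborhood of the origin 0 in ℝⁿ. -/
/-!
Write `S = ⋃ⱼ Aⱼ`. Both conditions say that every direction `x ≠ 0` has some `a ∈ S` with
`aᵀx > 0`. If instead `aᵀu ≤ 0` on `S` for some `u ≠ 0`, then `f` is bounded above on the ray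
`ℝ≥0 • u`, so some sublevel set is unbounded. Conversely, compactness of the unit sphere upgrades
the condition to `max_{a ∈ S} aᵀx ≥ m‖x‖` with `m > 0`, and `f x ≥ min log c + max_{a ∈ S} aᵀx`
then grows linearly. On the convex side, the same compactness argument on the dual sphere gives
`max_S φ ≥ m‖φ‖` for every functional `φ`, so no functional can separate a point of the ball of
radius `m` from the (closed) convex hull of `S`.
-/

open Real Set Filter Topology

section ConvexGeometry

variable {E : Type*} [NormedAddCommGroup E] [NormedSpace ℝ E]

theorem exists_pos_mul_norm_le_of_forall_exists_pos [ProperSpace E] {ι : Type*} [Finite ι]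
    [Nonempty ι] (ℓ : ι → StrongDual ℝ E) (h : ∀ x ≠ 0, ∃ i, 0 < ℓ i x) :
    ∃ m > 0, ∀ x, ∃ i, m * ‖x‖ ≤ ℓ i x := by
  have := Fintype.ofFinite ι
  set σ : E → ℝ := fun x => Finset.univ.sup' Finset.univ_nonempty fun i => ℓ i x
  have hσ : Continuous σ := Continuous.finset_sup'_apply _ fun i _ => (ℓ i).continuous
  obtain ⟨m, hm, hm_le⟩ : ∃ m > 0, ∀ u ∈ Metric.sphere (0 : E) 1, m ≤ σ u := by
    rcases (Metric.sphere (0 : E) 1).eq_empty_or_nonempty with h_empty | h_ne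
    · exact ⟨1, one_pos, by simp [h_empty]⟩
    obtain ⟨u, hu, hmin⟩ := (isCompact_sphere 0 1).exists_isMinOn h_ne hσ.continuousOn
    obtain ⟨i, hi⟩ := h u (ne_zero_of_norm_ne_zero (by simp_all))
    exact ⟨σ u, (Finset.lt_sup'_iff _).2 ⟨i, Finset.mem_univ _, hi⟩, hmin⟩
  refine ⟨m, hm, fun x => ?_⟩
  rcases eq_or_ne x 0 with rfl | hx
  · exact ⟨Classical.arbitrary ι, by simp⟩
  have hx_pos : 0 < ‖x‖ := norm_pos_iff.2 hx
  obtain ⟨i, -, hi⟩ :=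
    (Finset.le_sup'_iff _).1 (hm_le (‖x‖⁻¹ • x) (by simp [norm_smul, hx_pos.ne']))
  refine ⟨i, ?_⟩
  calc m * ‖x‖ ≤ ℓ i (‖x‖⁻¹ • x) * ‖x‖ := mul_le_mul_of_nonneg_right hi hx_pos.le
    _ = ℓ i x := by rw [map_smul, smul_eq_mul]; field_simp

theorem exists_pos_of_convexHull_mem_nhds_zero {S : Set E} (hS : convexHull ℝ S ∈ 𝓝 (0 : E))
    {φ : StrongDual ℝ E} (hφ : φ ≠ 0) : ∃ a ∈ S, 0 < φ a := by
  by_contra! h_nonpos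
  have h_sub : convexHull ℝ S ⊆ {z | φ z ≤ 0} :=
    convexHull_min h_nonpos (convex_halfSpace_le φ.toLinearMap.isLinear 0)
  obtain ⟨z, hz⟩ : ∃ z, φ z ≠ 0 := by
    by_contra! h
    exact hφ (ContinuousLinearMap.ext h)
  have h_tendsto : Tendsto (fun t : ℝ => (t * φ z) • z) (𝓝[>] 0) (𝓝 0) :=
    (((continuous_id.mul continuous_const).smul continuous_const).tendsto' 0 0 (by simp)).mono_left
      nhdsWithin_le_nhds
  obtain ⟨t, ht_mem, ht_pos⟩ := ((h_tendsto.eventually hS).and self_mem_nhdsWithin).exists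
  have : t * φ z * φ z ≤ 0 := by simpa using h_sub ht_mem
  nlinarith [mul_pos ht_pos (mul_self_pos.2 hz)]

theorem convexHull_mem_nhds_zero_of_forall_exists_pos [FiniteDimensional ℝ E] {S : Set E}
    (hS : S.Finite) (hne : S.Nonempty) (h : ∀ φ : StrongDual ℝ E, φ ≠ 0 → ∃ a ∈ S, 0 < φ a) :
    convexHull ℝ S ∈ 𝓝 (0 : E) := by
  have := hS.to_subtype
  have := hne.to_subtype
  obtain ⟨m, hm, hm_le⟩ := exists_pos_mul_norm_le_of_forall_exists_pos
    (fun a : S => ContinuousLinearMap.apply ℝ ℝ (a : E)) fun φ hφ => by simpa using h φ hφ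
  refine Metric.mem_nhds_iff.2 ⟨m, hm, fun x hx => ?_⟩
  by_contra hx_notin
  obtain ⟨φ, r, hφS, hφx⟩ := geometric_hahn_banach_closed_point (convex_convexHull ℝ S)
    (hS.isCompact_convexHull ℝ).isClosed hx_notin
  obtain ⟨⟨a, ha⟩, ha_le⟩ := hm_le φ
  have h_lt : φ a < r := hφS a (subset_convexHull ℝ S ha)
  have h_le : φ x ≤ ‖φ‖ * ‖x‖ := (le_abs_self _).trans (φ.le_opNorm x)
  have hx_lt : ‖x‖ < m := by simpa using hx
  simp only [ContinuousLinearMap.apply_apply] at ha_le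
  nlinarith [mul_le_mul_of_nonneg_left hx_lt.le (norm_nonneg φ)]

theorem convexHull_mem_nhds_zero_iff [FiniteDimensional ℝ E] {S : Set E} (hS : S.Finite)
    (hne : S.Nonempty) :
    convexHull ℝ S ∈ 𝓝 (0 : E) ↔ ∀ φ : StrongDual ℝ E, φ ≠ 0 → ∃ a ∈ S, 0 < φ a :=
  ⟨fun h _ hφ => exists_pos_of_convexHull_mem_nhds_zero h hφ,
    convexHull_mem_nhds_zero_of_forall_exists_pos hS hne⟩

end ConvexGeometry

theorem forall_exists_pos_strongDual_iff_dotProduct {ι : Type*} [Fintype ι] [DecidableEq ι]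
    {S : Set (ι → ℝ)} :
    (∀ φ : StrongDual ℝ (ι → ℝ), φ ≠ 0 → ∃ a ∈ S, 0 < φ a) ↔ ∀ x ≠ 0, ∃ a ∈ S, 0 < a ⬝ᵥ x := by
  let e := (dotProductEquiv ℝ ι).trans LinearMap.toContinuousLinearMap
  rw [← e.toEquiv.forall_congr_right]
  simp [e, dotProduct_comm]

section LogSumExp

variable {ι : Type*} [Fintype ι] {A : Finset (ι → ℝ)} {c : (ι → ℝ) → ℝ}

noncomputable def logSumExp (A : Finset (ι → ℝ)) (c : (ι → ℝ) → ℝ) (x : ι → ℝ) : ℝ :=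
  Real.log (∑ a ∈ A, c a * Real.exp (a ⬝ᵥ x))

theorem sum_mul_exp_dotProduct_pos (hA : A.Nonempty) (hc : ∀ a ∈ A, 0 < c a) (x : ι → ℝ) :
    0 < ∑ a ∈ A, c a * Real.exp (a ⬝ᵥ x) :=
  Finset.sum_pos (fun a ha => mul_pos (hc a ha) (exp_pos _)) hA

theorem continuous_logSumExp (hA : A.Nonempty) (hc : ∀ a ∈ A, 0 < c a) :
    Continuous (logSumExp A c) :=
  (continuous_finsetSum _ fun _ _ => continuous_const.mul
    (continuous_exp.comp (continuous_const.dotProduct continuous_id))).log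
    fun x => (sum_mul_exp_dotProduct_pos hA hc x).ne'

theorem log_add_dotProduct_le_logSumExp (hc : ∀ a ∈ A, 0 < c a) {a : ι → ℝ} (ha : a ∈ A)
    (x : ι → ℝ) : Real.log (c a) + a ⬝ᵥ x ≤ logSumExp A c x := by
  rw [← log_exp (a ⬝ᵥ x), ← log_mul (hc a ha).ne' (exp_pos _).ne']
  exact log_le_log (mul_pos (hc a ha) (exp_pos _)) <|
    Finset.single_le_sum (f := fun b => c b * exp (b ⬝ᵥ x)) (fun b hb => (mul_pos (hc b hb) (exp_pos _)).le) ha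

theorem logSumExp_le_log_sum_of_dotProduct_nonpos (hA : A.Nonempty) (hc : ∀ a ∈ A, 0 < c a)
    {x : ι → ℝ} (hx : ∀ a ∈ A, a ⬝ᵥ x ≤ 0) : logSumExp A c x ≤ Real.log (∑ a ∈ A, c a) :=
  log_le_log (sum_mul_exp_dotProduct_pos hA hc x) <| Finset.sum_le_sum fun a ha =>
    mul_le_of_le_one_right (hc a ha).le (exp_le_one_iff.2 (hx a ha))

end LogSumExp

section Coercivity

variable {ι κ : Type*} [Fintype ι] [Finite κ] (A : κ → Finset (ι → ℝ)) (c : κ → (ι → ℝ) → ℝ)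
  (f : (ι → ℝ) → ℝ)

theorem exists_pos_dotProduct_of_isCompact_sublevel (hA : ∀ j, (A j).Nonempty)
    (hc : ∀ j, ∀ a ∈ A j, 0 < c j a)
    (hf : ∀ x, IsGreatest {t | ∃ j, t = logSumExp (A j) (c j) x} (f x))
    (hcomp : ∀ t, IsCompact {x | f x ≤ t}) : ∀ x ≠ 0, ∃ j, ∃ a ∈ A j, 0 < a ⬝ᵥ x := by
  intro u hu
  by_contra! h_nonpos
  obtain ⟨T, hT⟩ := (finite_range fun j => Real.log (∑ a ∈ A j, c j a)).bddAbove
  have h_ray : ∀ s : ℝ, 0 ≤ s → f (s • u) ≤ T := by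
    intro s hs
    obtain ⟨j, hj⟩ := (hf (s • u)).1
    rw [hj]
    refine (logSumExp_le_log_sum_of_dotProduct_nonpos (hA j) (hc j) fun a ha => ?_).trans
      (hT (mem_range_self j))
    rw [dotProduct_smul, smul_eq_mul]
    exact mul_nonpos_of_nonneg_of_nonpos hs (h_nonpos j a ha)
  obtain ⟨C, hC⟩ := isBounded_iff_forall_norm_le.1 (hcomp T).isBounded
  have hu_pos : 0 < ‖u‖ := norm_pos_iff.2 hu
  have h_far := hC (((|C| + 1) / ‖u‖) • u) (h_ray _ (by positivity))
  rw [norm_smul, Real.norm_eq_abs, abs_of_pos (by positivity), div_mul_cancel₀ _ hu_pos.ne'] at h_far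
  linarith [le_abs_self C]

variable [DecidableEq ι]

theorem exists_pos_mul_norm_add_le (hA : ∀ j, (A j).Nonempty)
    (hc : ∀ j, ∀ a ∈ A j, 0 < c j a)
    (hf : ∀ x, IsGreatest {t | ∃ j, t = logSumExp (A j) (c j) x} (f x))
    (hpos : ∀ x ≠ 0, ∃ j, ∃ a ∈ A j, 0 < a ⬝ᵥ x) : ∃ m > 0, ∃ L, ∀ x, m * ‖x‖ + L ≤ f x := by
  obtain ⟨j₀, -⟩ := (hf 0).1
  have : Nonempty ((j : κ) × A j) := ⟨⟨j₀, (hA j₀).choose, (hA j₀).choose_spec⟩⟩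
  obtain ⟨m, hm, hm_le⟩ := exists_pos_mul_norm_le_of_forall_exists_pos
    (fun p : (j : κ) × A j => LinearMap.toContinuousLinearMap (dotProductEquiv ℝ ι p.2))
    (by simpa using hpos)
  obtain ⟨L, hL⟩ := (finite_range fun p : (j : κ) × A j => Real.log (c p.1 p.2)).bddBelow
  refine ⟨m, hm, L, fun x => ?_⟩
  obtain ⟨⟨j, a, ha⟩, hx⟩ := hm_le x
  calc m * ‖x‖ + L ≤ a ⬝ᵥ x + Real.log (c j a) := by
        gcongr
        · simpa using hx
        · exact hL (mem_range_self (⟨j, a, ha⟩ : (j : κ) × A j))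
    _ ≤ logSumExp (A j) (c j) x := by linarith [log_add_dotProduct_le_logSumExp (hc j) ha x]
    _ ≤ f x := (hf x).2 ⟨j, rfl⟩

theorem isCompact_sublevel_of_forall_exists_pos (hA : ∀ j, (A j).Nonempty)
    (hc : ∀ j, ∀ a ∈ A j, 0 < c j a)
    (hf : ∀ x, IsGreatest {t | ∃ j, t = logSumExp (A j) (c j) x} (f x))
    (hpos : ∀ x ≠ 0, ∃ j, ∃ a ∈ A j, 0 < a ⬝ᵥ x) (t : ℝ) : IsCompact {x | f x ≤ t} := by
  obtain ⟨m, hm, L, hmL⟩ := exists_pos_mul_norm_add_le A c f hA hc hf hpos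
  have h_eq : {x | f x ≤ t} = ⋂ j, {x | logSumExp (A j) (c j) x ≤ t} := by
    ext x
    simp only [mem_ofPred_eq, mem_iInter]
    refine ⟨fun hx j => ((hf x).2 ⟨j, rfl⟩).trans hx, fun hx => ?_⟩
    obtain ⟨j, hj⟩ := (hf x).1
    exact hj.trans_le (hx j)
  refine Metric.isCompact_of_isClosed_isBounded ?_
    (isBounded_iff_forall_norm_le.2 ⟨(t - L) / m, fun x hx => ?_⟩)
  · rw [h_eq]
    exact isClosed_iInter fun j => isClosed_le (continuous_logSumExp (hA j) (hc j)) continuous_const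
  · rw [le_div_iff₀ hm]
    linarith [hmL x, show f x ≤ t from hx]

end Coercivity

theorem stmt1_general {n N : ℕ}
    (A : Fin N → Finset (Fin n → ℝ)) (hA : ∀ j, (A j).Nonempty)
    (c : Fin N → (Fin n → ℝ) → ℝ) (hc : ∀ j, ∀ a ∈ A j, 0 < c j a)
    (f : (Fin n → ℝ) → ℝ)
    (hf : ∀ x, IsGreatest
      {t | ∃ j : Fin N,
        t = Real.log (∑ a ∈ A j, c j a * Real.exp (∑ i, a i * x i))} (f x)) :
    (∀ t : ℝ, IsCompact {x | f x ≤ t}) ↔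
      convexHull ℝ (⋃ j, (A j : Set (Fin n → ℝ))) ∈ nhds (0 : Fin n → ℝ) := by
  obtain ⟨j₀, -⟩ := (hf 0).1
  have hS : (⋃ j, (A j : Set (Fin n → ℝ))).Finite := finite_iUnion fun j => (A j).finite_toSet
  have hne : (⋃ j, (A j : Set (Fin n → ℝ))).Nonempty :=
    (Finset.coe_nonempty.2 (hA j₀)).mono (subset_iUnion _ j₀)
  rw [convexHull_mem_nhds_zero_iff hS hne, forall_exists_pos_strongDual_iff_dotProduct]
  simp only [mem_iUnion, Finset.mem_coe, ← exists_and_right, @exists_comm (Fin n → ℝ) (Fin N)]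
  exact ⟨exists_pos_dotProduct_of_isCompact_sublevel A c f hA hc hf,
    isCompact_sublevel_of_forall_exists_pos A c f hA hc hf⟩

theorem stmt1 {n N : ℕ} (hN : 1 ≤ N)
    (A : Fin N → Finset (Fin n → ℝ)) (hA : ∀ j, (A j).Nonempty)
    (c : Fin N → (Fin n → ℝ) → ℝ) (hc : ∀ j, ∀ a ∈ A j, 0 < c j a)
    (f : (Fin n → ℝ) → ℝ)
    (hf : ∀ x, IsGreatest
      {t | ∃ j : Fin N,
        t = Real.log (∑ a ∈ A j, c j a * Real.exp (∑ i, a i * x i))} (f x)) :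
    (∀ t : ℝ, IsCompact {x | f x ≤ t}) ↔
      convexHull ℝ (⋃ j, (A j : Set (Fin n → ℝ))) ∈ nhds (0 : Fin n → ℝ) :=
  stmt1_general A hA c hc f hf
end

section
/- Let f(x) = max_{j∈[N]} log(Σ_{a∈A_j} f_{a,j} exp(aᵀx)) with finite sets A_j ⊂ ℝⁿ and positive coefficients f_{a,j}. Define t_min = min over all a,j of log f_{a,j} and ν = min over ‖x‖_∞ = 1 of max over all a ∈ ∪_j A_j of aᵀx. If ν > 0, then f(x) ≥ t_min + ν‖x‖_∞ for all x ∈ ℝⁿ. -/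
set_option maxHeartbeats 1000000 in
theorem stmt2 {n N : ℕ} (hN : 1 ≤ N)
    (A : Fin N → Finset (Fin n → ℝ)) (hA : ∀ j, (A j).Nonempty)
    (c : Fin N → (Fin n → ℝ) → ℝ) (hc : ∀ j, ∀ a ∈ A j, 0 < c j a)
    (f : (Fin n → ℝ) → ℝ)
    (hf : ∀ x, IsGreatest
      {t | ∃ j : Fin N,
        t = Real.log (∑ a ∈ A j, c j a * Real.exp (∑ i, a i * x i))} (f x))
    (tmin : ℝ)
    (htmin : IsLeast {t | ∃ j : Fin N, ∃ a ∈ A j, t = Real.log (c j a)} tmin)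
    (m : (Fin n → ℝ) → ℝ)
    (hm : ∀ x, IsGreatest {s | ∃ j : Fin N, ∃ a ∈ A j, s = ∑ i, a i * x i} (m x))
    (ν : ℝ)
    (hν : IsLeast {t | ∃ x : Fin n → ℝ, ‖x‖ = 1 ∧ t = m x} ν)
    (hνpos : 0 < ν) :
    ∀ x : Fin n → ℝ, tmin + ν * ‖x‖ ≤ f x := by
  intro x
  -- Step 1: ν * ‖x‖ ≤ m x
  have hmx : ν * ‖x‖ ≤ m x := by
    rcases eq_or_ne x 0 with rfl | hx
    · have h0 : m 0 = 0 := by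
        obtain ⟨j, a, ha, hval⟩ := (hm 0).1
        simpa using hval
      simp [h0]
    · have hxn : (0:ℝ) < ‖x‖ := norm_pos_iff.mpr hx
      set u : Fin n → ℝ := (‖x‖)⁻¹ • x with hu
      have hun : ‖u‖ = 1 := by
        rw [hu, norm_smul]
        simp [abs_of_pos (inv_pos.mpr hxn), inv_mul_cancel₀ hxn.ne']
      have hνu : ν ≤ m u := hν.2 ⟨u, hun, rfl⟩
      obtain ⟨j, a, ha, hval⟩ := (hm u).1
      have hax : (∑ i, a i * x i) ≤ m x := (hm x).2 ⟨j, a, ha, rfl⟩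
      have hmu : m u = (‖x‖)⁻¹ * ∑ i, a i * x i := by
        rw [hval, Finset.mul_sum]
        congr 1; ext i
        simp [hu, Pi.smul_apply]; ring
      have : ν * ‖x‖ ≤ (∑ i, a i * x i) := by
        rw [hmu] at hνu
        calc ν * ‖x‖ ≤ ((‖x‖)⁻¹ * ∑ i, a i * x i) * ‖x‖ := by
              exact mul_le_mul_of_nonneg_right hνu hxn.le
          _ = ∑ i, a i * x i := by field_simp
      linarith
  -- Step 2: pick maximizer of m x
  obtain ⟨j, a, ha, hval⟩ := (hm x).1
  -- Step 3: f x ≥ log (sum over A j)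
  have hfx : Real.log (∑ b ∈ A j, c j b * Real.exp (∑ i, b i * x i)) ≤ f x :=
    (hf x).2 ⟨j, rfl⟩
  have hterm : c j a * Real.exp (∑ i, a i * x i)
      ≤ ∑ b ∈ A j, c j b * Real.exp (∑ i, b i * x i) :=
    Finset.single_le_sum (f := fun b => c j b * Real.exp (∑ i, b i * x i)) (fun b hb => le_of_lt (mul_pos (hc j b hb) (Real.exp_pos _))) ha
  have hlog : Real.log (c j a) + (∑ i, a i * x i)
      ≤ Real.log (∑ b ∈ A j, c j b * Real.exp (∑ i, b i * x i)) := by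
    have := Real.log_le_log (mul_pos (hc j a ha) (Real.exp_pos _)) hterm
    rwa [Real.log_mul (hc j a ha).ne' (Real.exp_pos _).ne', Real.log_exp] at this
  have htm : tmin ≤ Real.log (c j a) := htmin.2 ⟨j, a, ha, rfl⟩
  have : ν * ‖x‖ ≤ ∑ i, a i * x i := by rw [← hval]; exact hmx
  linarith
end

section
/- Let A ⊂ ℝⁿ be a finite set and f_A(x) = log(Σ_{a∈A} c_a exp(aᵀx)) with all c_a > 0. Then f_A is strictly convex on ℝⁿ if and only if the vectors in A form an affine generating family of ℝⁿ (i.e., the affine span of A is all of ℝⁿ). -/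
/-!
Along a line `x + s • v`, `f_A` becomes `s ↦ log ∑ₐ wₐ exp (tₐ s)` with `wₐ = c_a exp ⟨a, x⟩`
and `tₐ = ⟨a, v⟩`. The second derivative of this function is the variance of `t` under the
probability weights proportional to `wₐ exp (tₐ s)`, so it is strictly convex exactly when `t` is
not constant on `A`, and affine otherwise. Hence `f_A` is strictly convex iff no direction
`v ≠ 0` is orthogonal to all differences `a - b` of points of `A`, i.e. iff the vector span of `A`
is everything.
-/

open Finset Real

theorem sq_sum_mul_lt_sum_mul_sum_mul_sq {R ι : Type*} [Field R] [LinearOrder R]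
    [IsStrictOrderedRing R] {B : Finset ι} {w t : ι → R} (hw : ∀ a ∈ B, 0 < w a)
    (ht : ∃ a ∈ B, ∃ b ∈ B, t a ≠ t b) :
    (∑ a ∈ B, w a * t a) ^ 2 < (∑ a ∈ B, w a) * ∑ a ∈ B, w a * t a ^ 2 := by
  obtain ⟨a, ha, b, hb, hab⟩ := ht
  have hW : 0 < ∑ a ∈ B, w a := sum_pos hw ⟨a, ha⟩
  set m := (∑ a ∈ B, w a * t a) / ∑ a ∈ B, w a
  obtain ⟨i, hi, him⟩ : ∃ i ∈ B, t i ≠ m := by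
    by_contra! h
    exact hab ((h a ha).trans (h b hb).symm)
  have hvar : 0 < ∑ a ∈ B, w a * (t a - m) ^ 2 :=
    sum_pos' (fun j hj => mul_nonneg (hw j hj).le (sq_nonneg _))
      ⟨i, hi, mul_pos (hw i hi) (sq_pos_of_ne_zero (sub_ne_zero.mpr him))⟩
  have hexpand : ∑ a ∈ B, w a * (t a - m) ^ 2
      = ∑ a ∈ B, w a * t a ^ 2 - 2 * m * ∑ a ∈ B, w a * t a + m ^ 2 * ∑ a ∈ B, w a := by
    simp only [mul_sum, ← sum_sub_distrib, ← sum_add_distrib]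
    exact sum_congr rfl fun _ _ => by ring
  rw [hexpand] at hvar
  have hm : m * ∑ a ∈ B, w a = ∑ a ∈ B, w a * t a := div_mul_cancel₀ _ hW.ne'
  nlinarith

theorem hasDerivAt_sum_mul_exp_mul {ι : Type*} (B : Finset ι) (w t : ι → ℝ) (s : ℝ) :
    HasDerivAt (fun s => ∑ a ∈ B, w a * exp (t a * s)) (∑ a ∈ B, w a * t a * exp (t a * s)) s :=
  HasDerivAt.fun_sum fun a _ => by
    simpa [mul_comm, mul_left_comm, mul_assoc] using
      ((hasDerivAt_mul_const (t a)).exp).const_mul (w a)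

theorem strictConvexOn_log_sum_mul_exp_mul {ι : Type*} {B : Finset ι} {w t : ι → ℝ}
    (hw : ∀ a ∈ B, 0 < w a) (ht : ∃ a ∈ B, ∃ b ∈ B, t a ≠ t b) :
    StrictConvexOn ℝ Set.univ (fun s => log (∑ a ∈ B, w a * exp (t a * s))) := by
  obtain ⟨a₀, ha₀, -⟩ := id ht
  set S : (ι → ℝ) → ℝ → ℝ := fun v s => ∑ a ∈ B, v a * exp (t a * s)
  have hSpos : ∀ s, 0 < S w s :=
    fun s => sum_pos (fun a ha => mul_pos (hw a ha) (exp_pos _)) ⟨a₀, ha₀⟩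
  have hlog : ∀ s, HasDerivAt (fun s => log (S w s)) (S (w * t) s / S w s) s :=
    fun s => (hasDerivAt_sum_mul_exp_mul B w t s).log (hSpos s).ne'
  have hquot : ∀ s, HasDerivAt (fun s => S (w * t) s / S w s)
      ((S (w * t * t) s * S w s - S (w * t) s * S (w * t) s) / S w s ^ 2) s :=
    fun s => (hasDerivAt_sum_mul_exp_mul B (w * t) t s).div
      (hasDerivAt_sum_mul_exp_mul B w t s) (hSpos s).ne'
  refine strictConvexOn_univ_of_deriv2_pos
    (continuous_iff_continuousAt.mpr fun s => (hlog s).continuousAt) fun s => ?_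
  rw [Function.iterate_succ_apply, Function.iterate_one, funext fun s => (hlog s).deriv,
    (hquot s).deriv]
  refine div_pos ?_ (pow_pos (hSpos s) 2)
  have hvar := sq_sum_mul_lt_sum_mul_sum_mul_sq (w := fun a => w a * exp (t a * s)) (t := t)
    (fun a ha => mul_pos (hw a ha) (exp_pos _)) ht
  have h1 : S (w * t) s = ∑ a ∈ B, w a * exp (t a * s) * t a :=
    sum_congr rfl fun a _ => by simp only [Pi.mul_apply]; ring
  have h2 : S (w * t * t) s = ∑ a ∈ B, w a * exp (t a * s) * t a ^ 2 :=
    sum_congr rfl fun a _ => by simp only [Pi.mul_apply]; ring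
  rw [h1, h2]
  linarith

theorem not_strictConvexOn_univ_const_add_mul (α β : ℝ) :
    ¬ StrictConvexOn ℝ Set.univ (fun s : ℝ => α + β * s) := by
  intro h
  have := h.2 (Set.mem_univ 0) (Set.mem_univ 2) (by norm_num) (by norm_num : (0 : ℝ) < 1 / 2)
    (by norm_num : (0 : ℝ) < 1 / 2) (by norm_num)
  exact this.ne (by norm_num; ring)

theorem strictConvexOn_log_sum_mul_exp_mul_iff {ι : Type*} {B : Finset ι} {w t : ι → ℝ}
    (hB : B.Nonempty) (hw : ∀ a ∈ B, 0 < w a) :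
    StrictConvexOn ℝ Set.univ (fun s => log (∑ a ∈ B, w a * exp (t a * s))) ↔
      ∃ a ∈ B, ∃ b ∈ B, t a ≠ t b := by
  refine ⟨fun h => ?_, strictConvexOn_log_sum_mul_exp_mul hw⟩
  by_contra! ht
  obtain ⟨a₀, ha₀⟩ := hB
  have haffine : (fun s => log (∑ a ∈ B, w a * exp (t a * s)))
      = fun s => log (∑ a ∈ B, w a) + t a₀ * s := by
    funext s
    rw [sum_congr rfl fun a ha => by rw [ht a ha a₀ ha₀], ← sum_mul,
      log_mul (sum_pos hw ⟨a₀, ha₀⟩).ne' (exp_ne_zero _), log_exp]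
  exact not_strictConvexOn_univ_const_add_mul _ _ (haffine ▸ h)

theorem strictConvexOn_univ_iff_forall_add_smul {𝕜 E β : Type*} [Field 𝕜] [LinearOrder 𝕜]
    [IsStrictOrderedRing 𝕜] [AddCommGroup E] [Module 𝕜 E] [AddCommMonoid β] [PartialOrder β]
    [SMul 𝕜 β] {f : E → β} :
    StrictConvexOn 𝕜 Set.univ f ↔
      ∀ x v : E, v ≠ 0 → StrictConvexOn 𝕜 Set.univ (fun s : 𝕜 => f (x + s • v)) := by
  refine ⟨fun hf x v hv => ⟨convex_univ, fun s _ r _ hsr p q hp hq hpq => ?_⟩,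
    fun h => ⟨convex_univ, fun x _ y _ hxy p q hp hq hpq => ?_⟩⟩ <;>
    obtain rfl : p = 1 - q := eq_sub_of_add_eq hpq
  · have hne : x + s • v ≠ x + r • v :=
      fun h => hsr (smul_left_injective 𝕜 hv (add_left_cancel h))
    convert hf.2 (Set.mem_univ _) (Set.mem_univ _) hne hp hq hpq using 2
    module
  · convert (h x (y - x) (sub_ne_zero.mpr hxy.symm)).2 (Set.mem_univ 0) (Set.mem_univ 1)
      zero_ne_one hp hq hpq using 2
    · module
    all_goals simp

theorem vectorSpan_eq_top_iff_forall_dotProduct {K ι : Type*} [Field K] [Fintype ι]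
    [DecidableEq ι] {s : Set (ι → K)} :
    vectorSpan K s = ⊤ ↔ ∀ v ≠ 0, ∃ a ∈ s, ∃ b ∈ s, a ⬝ᵥ v ≠ b ⬝ᵥ v := by
  rw [vectorSpan_def, ← Submodule.dualAnnihilator_eq_bot_iff, Submodule.eq_bot_iff,
    ← (dotProductEquiv K ι).toEquiv.forall_congr_right]
  refine forall_congr' fun v => ?_
  rw [← SetLike.mem_coe, Submodule.coe_dualAnnihilator_span, Set.mem_ofPred_eq,
    Set.vsub_subset_iff, LinearEquiv.coe_toEquiv,
    map_eq_zero_iff _ (dotProductEquiv K ι).injective, not_imp_comm]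
  simp [sub_eq_zero, dotProduct_comm v]

theorem stmt4 {n : ℕ} (A : Finset (Fin n → ℝ)) (hA : A.Nonempty)
    (c : (Fin n → ℝ) → ℝ) (hc : ∀ a ∈ A, 0 < c a)
    (f : (Fin n → ℝ) → ℝ)
    (hf : ∀ x, f x = Real.log (∑ a ∈ A, c a * Real.exp (∑ i, a i * x i))) :
    StrictConvexOn ℝ Set.univ f ↔ affineSpan ℝ (A : Set (Fin n → ℝ)) = ⊤ := by
  have hline : ∀ x v, (fun s : ℝ => f (x + s • v))
      = fun s => log (∑ a ∈ A, c a * exp (a ⬝ᵥ x) * exp (a ⬝ᵥ v * s)) := by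
    intro x v
    funext s
    rw [hf]
    congr! 2 with a
    change c a * exp (a ⬝ᵥ (x + s • v)) = _
    rw [dotProduct_add, dotProduct_smul, smul_eq_mul, mul_assoc, ← exp_add, mul_comm s]
  calc StrictConvexOn ℝ Set.univ f
      ↔ ∀ x v : Fin n → ℝ, v ≠ 0 → ∃ a ∈ A, ∃ b ∈ A, a ⬝ᵥ v ≠ b ⬝ᵥ v := by
        rw [strictConvexOn_univ_iff_forall_add_smul]
        refine forall₃_congr fun x v _ => ?_
        rw [hline]
        exact strictConvexOn_log_sum_mul_exp_mul_iff hA fun a ha => mul_pos (hc a ha) (exp_pos _)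
    _ ↔ vectorSpan ℝ (A : Set (Fin n → ℝ)) = ⊤ := by
        rw [forall_const, vectorSpan_eq_top_iff_forall_dotProduct]
        simp only [mem_coe]
    _ ↔ affineSpan ℝ (A : Set (Fin n → ℝ)) = ⊤ :=
        (AffineSubspace.affineSpan_eq_top_iff_vectorSpan_eq_top_of_nonempty ℝ _ _
          (coe_nonempty.mpr hA)).symm
end

section
/- Let f(x) = max_{j∈[N]} log(Σ_{a∈A_j} f_{a,j} exp(aᵀx)) with finite sets A_j ⊂ ℝⁿ and positive coefficients, and assume ν = min_{‖x‖_∞=1} max_{a∈∪A_j} aᵀx > 0. If R ≥ (f(0) − t_min(f))/ν where t_min(f) = min{log f_{a,j}}, then every global minimizer of f lies in the ball {x : ‖x‖_∞ ≤ R}. -/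
theorem stmt8 {n N : ℕ} (hN : 1 ≤ N)
    (A : Fin N → Finset (Fin n → ℝ)) (hA : ∀ j, (A j).Nonempty)
    (c : Fin N → (Fin n → ℝ) → ℝ) (hc : ∀ j, ∀ a ∈ A j, 0 < c j a)
    (f : (Fin n → ℝ) → ℝ)
    (hf : ∀ x, IsGreatest
      {t | ∃ j : Fin N,
        t = Real.log (∑ a ∈ A j, c j a * Real.exp (∑ i, a i * x i))} (f x))
    (tmin : ℝ)
    (htmin : IsLeast {t | ∃ j : Fin N, ∃ a ∈ A j, t = Real.log (c j a)} tmin)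
    (m : (Fin n → ℝ) → ℝ)
    (hm : ∀ x, IsGreatest {s | ∃ j : Fin N, ∃ a ∈ A j, s = ∑ i, a i * x i} (m x))
    (ν : ℝ)
    (hν : IsLeast {t | ∃ x : Fin n → ℝ, ‖x‖ = 1 ∧ t = m x} ν)
    (hνpos : 0 < ν)
    (R : ℝ) (hR : (f 0 - tmin) / ν ≤ R) :
    ∀ x₀ : Fin n → ℝ, (∀ y, f x₀ ≤ f y) → ‖x₀‖ ≤ R := by
  -- key lemma: f x ≥ tmin + m x for all x
  have key : ∀ x : Fin n → ℝ, tmin + m x ≤ f x := by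
    intro x
    obtain ⟨⟨j, a, ha, hma⟩, _⟩ := hm x
    have hsum : Real.log (∑ a ∈ A j, c j a * Real.exp (∑ i, a i * x i)) ≤ f x :=
      (hf x).2 ⟨j, rfl⟩
    have hterm : c j a * Real.exp (∑ i, a i * x i)
        ≤ ∑ a ∈ A j, c j a * Real.exp (∑ i, a i * x i) :=
      Finset.single_le_sum (f := fun b => c j b * Real.exp (∑ i, b i * x i))
        (fun b hb => (mul_pos (hc j b hb) (Real.exp_pos _)).le) ha
    have hlog : Real.log (c j a * Real.exp (∑ i, a i * x i))
        ≤ Real.log (∑ a ∈ A j, c j a * Real.exp (∑ i, a i * x i)) :=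
      Real.log_le_log (mul_pos (hc j a ha) (Real.exp_pos _)) hterm
    have heq : Real.log (c j a * Real.exp (∑ i, a i * x i))
        = Real.log (c j a) + (∑ i, a i * x i) := by
      rw [Real.log_mul (ne_of_gt (hc j a ha)) (Real.exp_ne_zero _), Real.log_exp]
    have htm : tmin ≤ Real.log (c j a) := htmin.2 ⟨j, a, ha, rfl⟩
    calc tmin + m x = tmin + (∑ i, a i * x i) := by rw [hma]
      _ ≤ Real.log (c j a) + (∑ i, a i * x i) := by linarith
      _ ≤ f x := by rw [← heq]; exact le_trans hlog hsum
  -- m 0 = 0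
  have hm0 : m 0 = 0 := by
    obtain ⟨⟨j, a, ha, hma⟩, hub⟩ := hm (0 : Fin n → ℝ)
    have h1 : m 0 = 0 := by simpa using hma
    exact h1
  have hf0 : tmin ≤ f 0 := by have := key 0; rw [hm0] at this; linarith
  have hR0 : 0 ≤ R := le_trans (div_nonneg (by linarith) hνpos.le) hR
  -- homogeneity: ‖x‖ * ν ≤ m x
  have hhom : ∀ x : Fin n → ℝ, x ≠ 0 → ‖x‖ * ν ≤ m x := by
    intro x hx
    set u : Fin n → ℝ := ‖x‖⁻¹ • x with hu
    have hnx : (0:ℝ) < ‖x‖ := norm_pos_iff.mpr hx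
    have hun : ‖u‖ = 1 := norm_smul_inv_norm hx
    have hνu : ν ≤ m u := hν.2 ⟨u, hun, rfl⟩
    obtain ⟨⟨j, a, ha, hma⟩, _⟩ := hm u
    have hmu : m u = ‖x‖⁻¹ * (∑ i, a i * x i) := by
      rw [hma, Finset.mul_sum]
      refine Finset.sum_congr rfl fun i _ => ?_
      simp [hu]; ring
    have hax : (∑ i, a i * x i) ≤ m x := (hm x).2 ⟨j, a, ha, rfl⟩
    have : ν ≤ ‖x‖⁻¹ * m x := by
      refine le_trans hνu ?_
      rw [hmu]
      exact mul_le_mul_of_nonneg_left hax (by positivity)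
    calc ‖x‖ * ν ≤ ‖x‖ * (‖x‖⁻¹ * m x) := mul_le_mul_of_nonneg_left this hnx.le
      _ = m x := by field_simp
  intro x₀ hmin
  by_contra hcon
  push_neg at hcon
  have hx0 : x₀ ≠ 0 := by
    intro h; rw [h] at hcon; simp at hcon; linarith
  have h1 : tmin + ‖x₀‖ * ν ≤ f x₀ := le_trans (by linarith [hhom x₀ hx0]) (key x₀)
  have h2 : f 0 - tmin ≤ R * ν := (div_le_iff₀ hνpos).mp hR
  have h3 : R * ν < ‖x₀‖ * ν := by
    exact mul_lt_mul_of_pos_right hcon hνpos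
  have := hmin 0
  linarith
end

section
/- Let g be a nonzero homogeneous polynomial of degree d ≥ 1 in n+1 variables with nonnegative coefficients, and let p ∈ [1,∞). If w ≥ 0 with ‖w‖_p = 1 is a local maximum point of g on the ball {z : ‖z‖_p ≤ 1}, then for every index j with w_j > 0 one has (1/d)·∂g/∂z_j(w) = g(w)·w_j^{p−1}. -/
/-!
Homogeneity lets one rescale any point `x` near `w` back onto the unit sphere, so the local
maximality of `w` on the ball becomes `g x ≤ ‖x‖_p ^ d * g w` near `w`, with equality at `w`.
Along the line through `w` in the `j`-th coordinate both sides are differentiable and touch at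
`w j`, so their derivatives agree there: `∂_j g (w) = d * g w * w_j ^ (p - 1)`, using
`∂_j ‖x‖_p = ‖x‖_p ^ (1 - p) * x_j ^ (p - 1)` where `x_j > 0`.
-/

open MvPolynomial Filter Topology Function

namespace MvPolynomial

theorem IsHomogeneous.eval_smul {σ R : Type*} [Fintype σ] [CommSemiring R]
    {g : MvPolynomial σ R} {d : ℕ} (hg : g.IsHomogeneous d) (c : R) (x : σ → R) :
    eval (c • x) g = c ^ d * eval x g := by
  rw [eval_eq', eval_eq', Finset.mul_sum]
  refine Finset.sum_congr rfl fun s hs => ?_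
  have hdeg : ∑ i, s i = d := by
    rw [← Finsupp.degree_eq_sum, Finsupp.degree_eq_weight_one]
    exact hg (mem_support_iff.mp hs)
  simp only [Pi.smul_apply, smul_eq_mul, mul_pow, Finset.prod_mul_distrib,
    Finset.prod_pow_eq_pow_sum, hdeg]
  ring

theorem hasDerivAt_eval_update {σ 𝕜 : Type*} [DecidableEq σ] [NontriviallyNormedField 𝕜]
    (g : MvPolynomial σ 𝕜) (w : σ → 𝕜) (j : σ) (s : 𝕜) :
    HasDerivAt (fun t => eval (update w j t) g) (eval (update w j s) (pderiv j g)) s := by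
  induction g using MvPolynomial.induction_on with
  | C a => simpa using hasDerivAt_const s a
  | add q r hq hr =>
    simp only [map_add]
    exact hq.add hr
  | mul_X q i hq =>
    simp only [map_mul, eval_X, Derivation.leibniz, smul_eq_mul]
    rcases eq_or_ne i j with rfl | hij
    · simp only [update_self]
      exact (hq.mul (hasDerivAt_id' s)).congr_deriv (by simp; ring)
    · simp only [update_of_ne hij]
      exact (hq.mul_const (w i)).congr_deriv (by simp [hij, mul_comm])

end MvPolynomial

theorem IsLocalMaxOn.eventually_le_pow_mul_of_homogeneous {E : Type*} [AddCommGroup E]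
    [Module ℝ E] [TopologicalSpace E] [ContinuousSMul ℝ E] {f N : E → ℝ} {d : ℕ} {w : E}
    (hf : ∀ c : ℝ, 0 < c → ∀ x, f (c • x) = c ^ d * f x)
    (hN : ∀ c : ℝ, 0 < c → ∀ x, N (c • x) = c * N x)
    (hNw : N w = 1) (hNc : ContinuousAt N w) (hmax : IsLocalMaxOn f {x | N x ≤ 1} w) :
    ∀ᶠ x in 𝓝 w, f x ≤ N x ^ d * f w := by
  have hpos : ∀ᶠ x in 𝓝 w, 0 < N x := hNc.eventually (lt_mem_nhds (by simp [hNw]))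
  have hnormalize : Tendsto (fun x => (N x)⁻¹ • x) (𝓝 w) (𝓝[{x | N x ≤ 1}] w) := by
    refine tendsto_nhdsWithin_of_tendsto_nhds_of_eventually_within _ ?_ ?_
    · have : ContinuousAt (fun x => (N x)⁻¹ • x) w :=
        (hNc.inv₀ (by simp [hNw])).smul continuousAt_id
      simpa [hNw] using this.tendsto
    · filter_upwards [hpos] with x hx
      simp [hN _ (inv_pos.2 hx), inv_mul_cancel₀ hx.ne']
  filter_upwards [hpos, hnormalize.eventually hmax] with x hx hle
  calc f x = N x ^ d * f ((N x)⁻¹ • x) := by rw [← hf _ hx, smul_inv_smul₀ hx.ne']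
    _ ≤ N x ^ d * f w := by gcongr

theorem HasDerivAt.eq_of_eventually_le_of_eq {F G : ℝ → ℝ} {F' G' a : ℝ}
    (hF : HasDerivAt F F' a) (hG : HasDerivAt G G' a)
    (hle : ∀ᶠ x in 𝓝 a, F x ≤ G x) (heq : F a = G a) : F' = G' := by
  have hmin : IsLocalMin (G - F) a := by
    filter_upwards [hle] with x hx
    simp only [Pi.sub_apply, heq, sub_self]
    linarith
  linarith [hmin.hasDerivAt_eq_zero (hG.sub hF)]

section pNorm

variable {ι : Type*} [Fintype ι]

noncomputable def pNorm (p : ℝ) (x : ι → ℝ) : ℝ := (∑ i, |x i| ^ p) ^ (1 / p)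

theorem pNorm_smul {p : ℝ} (hp : 0 < p) {c : ℝ} (hc : 0 ≤ c) (x : ι → ℝ) :
    pNorm p (c • x) = c * pNorm p x := by
  have hsum : ∑ i, |(c • x) i| ^ p = c ^ p * ∑ i, |x i| ^ p := by
    simp only [Pi.smul_apply, smul_eq_mul, abs_mul, abs_of_nonneg hc,
      Real.mul_rpow hc (abs_nonneg _), Finset.mul_sum]
  rw [pNorm, pNorm, hsum, Real.mul_rpow (Real.rpow_nonneg hc _)
    (Finset.sum_nonneg fun i _ => Real.rpow_nonneg (abs_nonneg _) _), one_div,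
    Real.rpow_rpow_inv hc hp.ne']

theorem continuous_pNorm {p : ℝ} (hp : 0 < p) : Continuous (pNorm (ι := ι) p) := by
  unfold pNorm
  exact (continuous_finsetSum _ fun i _ => ((continuous_apply i).abs.rpow_const
    fun _ => Or.inr hp.le)).rpow_const fun _ => Or.inr (by positivity)

theorem hasDerivAt_pNorm_update [DecidableEq ι] {p : ℝ} (hp : 0 < p) {x : ι → ℝ} {j : ι}
    (hj : 0 < x j) :
    HasDerivAt (fun s => pNorm p (update x j s)) (pNorm p x ^ (1 - p) * x j ^ (p - 1)) (x j) := by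
  set C := ∑ i ∈ Finset.univ \ {j}, |x i| ^ p
  have hsum (s : ℝ) : ∑ i, |update x j s i| ^ p = |s| ^ p + C := by
    rw [← Finset.sum_update_of_mem (Finset.mem_univ j)]
    exact Finset.sum_congr rfl fun i _ => apply_update (fun _ y => |y| ^ p) x j s i
  have hS : HasDerivAt (fun s => ∑ i, |update x j s i| ^ p) (p * x j ^ (p - 1)) (x j) := by
    refine ((Real.hasDerivAt_rpow_const (Or.inl hj.ne')).add_const C).congr_of_eventuallyEq ?_
    filter_upwards [lt_mem_nhds hj] with s hs
    rw [hsum, abs_of_pos hs]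
  have hpos : 0 < ∑ i, |x i| ^ p := by
    rw [← update_eq_self j x, hsum, abs_of_pos hj]
    positivity
  refine (hS.rpow_const (p := 1 / p) (Or.inl (by simpa using hpos.ne'))).congr_deriv ?_
  have hexp : 1 / p - 1 = 1 / p * (1 - p) := by field_simp
  rw [update_eq_self, pNorm, hexp, Real.rpow_mul hpos.le]
  field_simp

end pNorm

theorem stmt12_general {n : ℕ} (d : ℕ) (hd : 1 ≤ d)
    (g : MvPolynomial (Fin (n + 1)) ℝ)
    (hhom : g.IsHomogeneous d)
    (p : ℝ) (hp : 1 ≤ p)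
    (w : Fin (n + 1) → ℝ)
    (hwn : (∑ i, |w i| ^ p) ^ (1 / p) = 1)
    (hmax : IsLocalMaxOn (fun z => MvPolynomial.eval z g)
      {z : Fin (n + 1) → ℝ | (∑ i, |z i| ^ p) ^ (1 / p) ≤ 1} w) :
    ∀ j : Fin (n + 1), 0 < w j →
      (1 / (d : ℝ)) * MvPolynomial.eval w (MvPolynomial.pderiv j g) =
        MvPolynomial.eval w g * w j ^ (p - 1) := by
  intro j hwj
  have hp0 : 0 < p := by linarith
  have hwn : pNorm p w = 1 := hwn
  have hle : ∀ᶠ x in 𝓝 w, eval x g ≤ pNorm p x ^ d * eval w g :=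
    hmax.eventually_le_pow_mul_of_homogeneous (N := pNorm p)
      (fun c _ x => hhom.eval_smul c x) (fun c hc x => pNorm_smul hp0 hc.le x) hwn
      (continuous_pNorm hp0).continuousAt
  have hline : Tendsto (update w j) (𝓝 (w j)) (𝓝 w) := by
    have : Continuous (update w j) := continuous_const.update j continuous_id
    simpa using this.tendsto (w j)
  have hderiv := (hasDerivAt_eval_update g w j (w j)).eq_of_eventually_le_of_eq
    (((hasDerivAt_pNorm_update hp0 hwj).pow d).mul_const (eval w g))
    (hline.eventually hle) (by simp [hwn])
  simp only [update_eq_self, hwn, Real.one_rpow, one_pow, mul_one, one_mul] at hderiv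
  rw [hderiv]
  have : (d : ℝ) ≠ 0 := Nat.cast_ne_zero.2 (by omega)
  field_simp

theorem stmt12 {n : ℕ} (d : ℕ) (hd : 1 ≤ d)
    (g : MvPolynomial (Fin (n + 1)) ℝ) (hg : g ≠ 0)
    (hhom : g.IsHomogeneous d) (hcoeff : ∀ mo, 0 ≤ g.coeff mo)
    (p : ℝ) (hp : 1 ≤ p)
    (w : Fin (n + 1) → ℝ) (hw : ∀ i, 0 ≤ w i)
    (hwn : (∑ i, |w i| ^ p) ^ (1 / p) = 1)
    (hmax : IsLocalMaxOn (fun z => MvPolynomial.eval z g)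
      {z : Fin (n + 1) → ℝ | (∑ i, |z i| ^ p) ^ (1 / p) ≤ 1} w) :
    ∀ j : Fin (n + 1), 0 < w j →
      (1 / (d : ℝ)) * MvPolynomial.eval w (MvPolynomial.pderiv j g) =
        MvPolynomial.eval w g * w j ^ (p - 1) :=
  stmt12_general d hd g hhom p hp w hwn hmax
end

section
/- Let g be a nonzero homogeneous polynomial of degree d ≥ 1 in n+1 variables with nonnegative coefficients, and p = 1. If w ≥ 0 with ‖w‖₁ = 1 is a local maximum point of g on the ball {z : ‖z‖₁ ≤ 1} and w_j = 0, then −g(w) ≤ (1/d)·∂g/∂z_j(w) ≤ g(w). -/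
/-!
The lower bound holds because a polynomial with nonnegative coefficients, and hence each of its
partial derivatives, is nonnegative on the nonnegative orthant. For the upper bound, the segment
from `w` to the vertex `e_j` of the ℓ₁ ball stays in the ball, so the derivative of `g` at `w` in
the direction `e_j - w` is nonpositive. That derivative is `∂ⱼg(w) - ⟨w, ∇g(w)⟩`, and by Euler's
identity `⟨w, ∇g(w)⟩ = d g(w)`.
-/

open MvPolynomial Finset

namespace MvPolynomial

section Nonneg

variable {σ R : Type*} [CommSemiring R] [PartialOrder R] [IsOrderedRing R]
  {p : MvPolynomial σ R}

lemma eval_nonneg_of_coeff_nonneg (hp : ∀ m, 0 ≤ p.coeff m) {x : σ → R} (hx : ∀ i, 0 ≤ x i) :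
    0 ≤ eval x p := by
  rw [eval_eq]
  exact sum_nonneg fun m _ => mul_nonneg (hp m) (prod_nonneg fun i _ => pow_nonneg (hx i) _)

lemma coeff_pderiv_nonneg (hp : ∀ m, 0 ≤ p.coeff m) (i : σ) (m : σ →₀ ℕ) :
    0 ≤ (pderiv i p).coeff m := by
  rw [coeff_pderiv]
  exact mul_nonneg (hp _) (add_nonneg (Nat.cast_nonneg _) zero_le_one)

end Nonneg

variable {σ : Type*} [Fintype σ]

lemma IsHomogeneous.sum_mul_eval_pderiv {R : Type*} [CommSemiring R] {p : MvPolynomial σ R}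
    {d : ℕ} (hp : p.IsHomogeneous d) (x : σ → R) :
    ∑ i, x i * eval x (pderiv i p) = d * eval x p := by
  simpa [map_sum, nsmul_eq_mul] using congrArg (eval x) hp.sum_X_mul_pderiv

lemma hasFDerivAt_eval {𝕜 : Type*} [NontriviallyNormedField 𝕜] (p : MvPolynomial σ 𝕜)
    (x : σ → 𝕜) :
    HasFDerivAt (fun z => eval z p)
      (∑ i, eval x (pderiv i p) • (ContinuousLinearMap.proj i : (σ → 𝕜) →L[𝕜] 𝕜)) x := by
  induction p using MvPolynomial.induction_on with
  | C a =>
    simp only [eval_C, pderiv_C, map_zero]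
    refine (hasFDerivAt_const a x).congr_fderiv ?_
    ext v
    simp
  | add p q hp hq =>
    simp only [map_add]
    refine (hp.fun_add hq).congr_fderiv ?_
    ext v
    simp [add_mul, sum_add_distrib]
  | mul_X p i hp =>
    classical
    simp only [eval_mul, eval_X]
    refine (hp.mul (hasFDerivAt_apply i x)).congr_fderiv ?_
    ext v
    simp [Pi.single_apply, add_mul, sum_add_distrib, mul_sum, apply_ite (eval x), mul_assoc]

end MvPolynomial

lemma convex_setOf_sum_abs_le {ι : Type*} [Fintype ι] (r : ℝ) :
    Convex ℝ {z : ι → ℝ | ∑ i, |z i| ≤ r} := by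
  intro x hx y hy a b ha hb hab
  calc ∑ i, |a * x i + b * y i| ≤ ∑ i, (a * |x i| + b * |y i|) :=
        sum_le_sum fun i _ => (abs_add_le _ _).trans_eq <| by
          rw [abs_mul, abs_mul, abs_of_nonneg ha, abs_of_nonneg hb]
    _ = a * ∑ i, |x i| + b * ∑ i, |y i| := by rw [sum_add_distrib, mul_sum, mul_sum]
    _ ≤ a * r + b * r := by gcongr <;> assumption
    _ = r := by rw [← add_mul, hab, one_mul]

section LocalMax

variable {σ : Type*} [Fintype σ] {p : MvPolynomial σ ℝ} {s : Set (σ → ℝ)}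
  {w : σ → ℝ}

lemma IsLocalMaxOn.sum_mul_eval_pderiv_le {v : σ → ℝ}
    (hmax : IsLocalMaxOn (fun z => eval z p) s w) (hseg : segment ℝ w v ⊆ s) :
    ∑ i, v i * eval w (pderiv i p) ≤ ∑ i, w i * eval w (pderiv i p) := by
  have h := hmax.hasFDerivWithinAt_nonpos (hasFDerivAt_eval p w).hasFDerivWithinAt
    (sub_mem_posTangentConeAt_of_segment_subset hseg)
  simpa only [_root_.sum_apply, smul_apply, ContinuousLinearMap.proj_apply,
    Pi.sub_apply, smul_eq_mul, mul_comm, sub_mul, sum_sub_distrib, sub_nonpos] using h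

lemma IsLocalMaxOn.eval_pderiv_le_of_isHomogeneous [DecidableEq σ] {d : ℕ} (hp : p.IsHomogeneous d)
    (hmax : IsLocalMaxOn (fun z => eval z p) s w) {j : σ}
    (hseg : segment ℝ w (Pi.single j 1) ⊆ s) :
    eval w (pderiv j p) ≤ d * eval w p := by
  simpa [Pi.single_apply, hp.sum_mul_eval_pderiv] using hmax.sum_mul_eval_pderiv_le hseg

end LocalMax

theorem stmt13_general {n : ℕ} (d : ℕ)
    (g : MvPolynomial (Fin (n + 1)) ℝ)
    (hhom : g.IsHomogeneous d) (hcoeff : ∀ mo, 0 ≤ g.coeff mo)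
    (w : Fin (n + 1) → ℝ) (hw : ∀ i, 0 ≤ w i)
    (hwn : (∑ i, |w i|) = 1)
    (hmax : IsLocalMaxOn (fun z => MvPolynomial.eval z g)
      {z : Fin (n + 1) → ℝ | (∑ i, |z i|) ≤ 1} w)
    (j : Fin (n + 1)) :
    -(MvPolynomial.eval w g) ≤ (1 / (d : ℝ)) * MvPolynomial.eval w (MvPolynomial.pderiv j g) ∧
      (1 / (d : ℝ)) * MvPolynomial.eval w (MvPolynomial.pderiv j g) ≤ MvPolynomial.eval w g := by
  have hval : 0 ≤ eval w g := eval_nonneg_of_coeff_nonneg hcoeff hw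
  have hpderiv : 0 ≤ eval w (pderiv j g) :=
    eval_nonneg_of_coeff_nonneg (coeff_pderiv_nonneg hcoeff j) hw
  have hseg : segment ℝ w (Pi.single j 1) ⊆ {z | ∑ i, |z i| ≤ 1} :=
    (convex_setOf_sum_abs_le 1).segment_subset hwn.le (by simp [Pi.single_apply, apply_ite])
  have hle : eval w (pderiv j g) ≤ d * eval w g :=
    hmax.eval_pderiv_le_of_isHomogeneous hhom hseg
  constructor
  · exact (neg_nonpos.2 hval).trans (by positivity)
  · calc 1 / (d : ℝ) * eval w (pderiv j g) ≤ 1 / d * (d * eval w g) := by gcongr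
      _ = ((d : ℝ)⁻¹ * d) * eval w g := by ring
      _ ≤ eval w g := mul_le_of_le_one_left hval inv_mul_le_one

theorem stmt13 {n : ℕ} (d : ℕ) (hd : 1 ≤ d)
    (g : MvPolynomial (Fin (n + 1)) ℝ) (hg : g ≠ 0)
    (hhom : g.IsHomogeneous d) (hcoeff : ∀ mo, 0 ≤ g.coeff mo)
    (w : Fin (n + 1) → ℝ) (hw : ∀ i, 0 ≤ w i)
    (hwn : (∑ i, |w i|) = 1)
    (hmax : IsLocalMaxOn (fun z => MvPolynomial.eval z g)
      {z : Fin (n + 1) → ℝ | (∑ i, |z i|) ≤ 1} w)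
    (j : Fin (n + 1)) (hj : w j = 0) :
    -(MvPolynomial.eval w g) ≤ (1 / (d : ℝ)) * MvPolynomial.eval w (MvPolynomial.pderiv j g) ∧
      (1 / (d : ℝ)) * MvPolynomial.eval w (MvPolynomial.pderiv j g) ≤ MvPolynomial.eval w g :=
  stmt13_general d g hhom hcoeff w hw hwn hmax j
end

section
/- Let E ⊂ 2^{[n+1]}_d be a set of d-element subsets of [n+1] (a d-uniform hypergraph), H(E) its 0/1 symmetric adjacency tensor, and g(z) = ⟨H(E), z^{⊗d}⟩. Then ∏_{i=1}^{d−1}(ω(E) − i) ≤ μ_d(g), where ω(E) is the maximum cardinality of a clique C ⊆ [n+1] (meaning all d-subsets of C lie in E) and μ_d(g) = max_{‖z‖_d ≤ 1} g(z). -/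
/-!
Test `g` on the normalised indicator `z = ω^(-1/d) · 1_C` of a maximum clique `C`, which lies on
the unit sphere of the `d`-norm. All summands of `g z` are nonnegative and the `C(ω, d)` edges inside
`C` each contribute `ω⁻¹`, so `μ ≥ g z ≥ d! C(ω, d) / ω = (ω - 1) ⋯ (ω - d + 1)`. Since `d ≥ 2`,
every singleton is a clique, so `ω ≥ 1` and the division is harmless.
-/

open Finset Nat

variable {α : Type*}

def IsHyperClique (E : Finset (Finset α)) (d : ℕ) (C : Finset α) : Prop :=
  ∀ S ⊆ C, S.card = d → S ∈ E

namespace IsHyperClique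

variable {E : Finset (Finset α)} {d : ℕ}

theorem singleton (hd : 2 ≤ d) (a : α) : IsHyperClique E d {a} := fun S hS hSd => by
  have := card_le_card hS
  rw [card_singleton] at this
  omega

theorem powersetCard_subset {C : Finset α} (hC : IsHyperClique E d C) :
    C.powersetCard d ⊆ E := fun S hS => by
  rw [mem_powersetCard] at hS
  exact hC S hS.1 hS.2

end IsHyperClique

theorem prod_Icc_sub_eq_factorial_mul_choose_div {K : Type*} [Field K] [CharZero K] {d k : ℕ}
    (hd : 1 ≤ d) (hk : k ≠ 0) :
    ∏ i ∈ Icc 1 (d - 1), ((k : K) - i) = d ! * k.choose d / k := by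
  obtain ⟨m, rfl⟩ := Nat.exists_eq_add_of_le' hd
  rw [cast_choose_eq_descPochhammer_div, descPochhammer_eval_eq_prod_range, prod_range_succ',
    mul_div_cancel₀ _ (mod_cast (m + 1).factorial_ne_zero), cast_zero, sub_zero,
    mul_div_cancel_right₀ _ (by simpa), add_tsub_cancel_right, ← Ico_add_one_right_eq_Icc,
    prod_Ico_eq_prod_range, add_tsub_cancel_right]
  simp only [cast_add, cast_one, add_comm]

theorem sum_powersetCard_prod_ite_mem {R : Type*} [CommSemiring R] [DecidableEq α]
    (C : Finset α) (d : ℕ) (c : R) :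
    ∑ S ∈ C.powersetCard d, ∏ i ∈ S, (if i ∈ C then c else 0) = C.card.choose d * c ^ d := by
  rw [sum_congr rfl fun S hS => ?_, sum_const, card_powersetCard, nsmul_eq_mul]
  rw [mem_powersetCard] at hS
  rw [prod_congr rfl fun i hi => if_pos (hS.1 hi), prod_const, hS.2]

theorem sum_abs_rpow_ite_mem [Fintype α] [DecidableEq α] (C : Finset α) (c : ℝ) {p : ℝ}
    (hp : p ≠ 0) : ∑ i, |if i ∈ C then c else 0| ^ p = C.card * |c| ^ p := by
  simp only [apply_ite (fun x : ℝ => |x| ^ p), abs_zero, Real.zero_rpow hp, sum_ite_mem,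
    univ_inter, sum_const, nsmul_eq_mul]

theorem stmt16_general {n d : ℕ} (hd : 2 ≤ d)
    (E : Finset (Finset (Fin (n + 1))))
    (g : (Fin (n + 1) → ℝ) → ℝ)
    (hg : ∀ z, g z = (d.factorial : ℝ) * ∑ S ∈ E, ∏ i ∈ S, z i)
    (ω : ℕ)
    (hω : IsGreatest {k | ∃ C : Finset (Fin (n + 1)), C.card = k ∧
      ∀ S : Finset (Fin (n + 1)), S ⊆ C → S.card = d → S ∈ E} ω)
    (μ : ℝ)
    (hμ : IsGreatest {t | ∃ z : Fin (n + 1) → ℝ,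
      (∑ i, |z i| ^ (d : ℝ)) ^ (1 / (d : ℝ)) ≤ 1 ∧ t = g z} μ) :
    (∏ i ∈ Finset.Icc 1 (d - 1), ((ω : ℝ) - (i : ℝ))) ≤ μ := by
  obtain ⟨C, rfl, hC : IsHyperClique E d C⟩ := hω.1
  have hC0 : C.card ≠ 0 :=
    one_le_iff_ne_zero.mp (hω.2 ⟨{0}, card_singleton 0, IsHyperClique.singleton hd 0⟩)
  have hd0 : (d : ℝ) ≠ 0 := by positivity
  set c : ℝ := ((C.card : ℝ)⁻¹) ^ (d : ℝ)⁻¹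
  have hc0 : 0 ≤ c := by positivity
  have hcd : c ^ d = (C.card : ℝ)⁻¹ := Real.rpow_inv_natCast_pow (by positivity) (by omega)
  set z : Fin (n + 1) → ℝ := fun i => if i ∈ C then c else 0
  have hz : (∑ i, |z i| ^ (d : ℝ)) ^ (1 / (d : ℝ)) ≤ 1 := by
    rw [sum_abs_rpow_ite_mem C c hd0, abs_of_nonneg hc0, Real.rpow_inv_rpow (by positivity) hd0,
      mul_inv_cancel₀ (cast_ne_zero.mpr hC0), Real.one_rpow]
  calc ∏ i ∈ Icc 1 (d - 1), ((C.card : ℝ) - i)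
      = d ! * (C.card.choose d * c ^ d) := by
        rw [prod_Icc_sub_eq_factorial_mul_choose_div (by omega) hC0, hcd, mul_div_assoc,
          div_eq_mul_inv]
    _ = d ! * ∑ S ∈ C.powersetCard d, ∏ i ∈ S, z i := by rw [sum_powersetCard_prod_ite_mem]
    _ ≤ d ! * ∑ S ∈ E, ∏ i ∈ S, z i := by
        gcongr
        exact hC.powersetCard_subset
    _ = g z := (hg z).symm
    _ ≤ μ := hμ.2 ⟨z, hz, rfl⟩

theorem stmt16 {n d : ℕ} (hd : 2 ≤ d) (hdn : d ≤ n + 1)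
    (E : Finset (Finset (Fin (n + 1)))) (hE : ∀ S ∈ E, S.card = d)
    (g : (Fin (n + 1) → ℝ) → ℝ)
    (hg : ∀ z, g z = (d.factorial : ℝ) * ∑ S ∈ E, ∏ i ∈ S, z i)
    (ω : ℕ)
    (hω : IsGreatest {k | ∃ C : Finset (Fin (n + 1)), C.card = k ∧
      ∀ S : Finset (Fin (n + 1)), S ⊆ C → S.card = d → S ∈ E} ω)
    (μ : ℝ)
    (hμ : IsGreatest {t | ∃ z : Fin (n + 1) → ℝ,
      (∑ i, |z i| ^ (d : ℝ)) ^ (1 / (d : ℝ)) ≤ 1 ∧ t = g z} μ) :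
    (∏ i ∈ Finset.Icc 1 (d - 1), ((ω : ℝ) - (i : ℝ))) ≤ μ :=
  stmt16_general hd E g hg ω hω μ hμ
end

section
/- Let g be a nonzero nonnegative quasi-homogeneous polynomial of degree d ≥ 2 in variables z ∈ ℝ₊^{n+1}, let p ≥ d+1, and define g̃(z, z_{n+2}) = z_{n+2}^{p−d}·g(z). Then μ_p(g̃) = α_{d,p}·μ_p(g), where μ_p denotes the maximum over the respective nonnegative ℓ_p unit balls and α_{d,p} = max_{t∈[0,1]} t^{p−d}(1−t^p)^{d/p} = (1−d/p)^{(p−d)/p}(d/p)^{d/p}. -/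
/-!
Rescaling the `z`-block of a feasible point `(z, s)` onto the sphere of radius
`(1 - s ^ p) ^ (1 / p)` and using the `d`-homogeneity of `g` shows that `μ_p(g̃)` is the
maximum over `s ∈ [0, 1]` of `s ^ (p - d) * (1 - s ^ p) ^ (d / p) * μ_p(g)`, i.e.
`α_{d,p} * μ_p(g)`. With `u = s ^ p` the factor becomes `u ^ (1 - d / p) * (1 - u) ^ (d / p)`,
which weighted AM-GM bounds by its value at `u = 1 - d / p`.
-/

open Finset

namespace Real

lemma rpow_one_div_le_one_iff {x p : ℝ} (hx : 0 ≤ x) (hp : 0 < p) :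
    x ^ (1 / p) ≤ 1 ↔ x ≤ 1 := by
  rw [one_div, rpow_inv_le_iff_of_pos hx zero_le_one hp, one_rpow]

lemma rpow_one_sub_mul_one_sub_rpow_le {b u : ℝ} (hb₀ : 0 < b) (hb₁ : b < 1)
    (hu₀ : 0 ≤ u) (hu₁ : u ≤ 1) :
    u ^ (1 - b) * (1 - u) ^ b ≤ (1 - b) ^ (1 - b) * b ^ b := by
  have ha : 0 < 1 - b := sub_pos.2 hb₁
  have hv : 0 ≤ 1 - u := sub_nonneg.2 hu₁
  have amgm : (u / (1 - b)) ^ (1 - b) * ((1 - u) / b) ^ b ≤ 1 :=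
    calc _ ≤ (1 - b) * (u / (1 - b)) + b * ((1 - u) / b) :=
          geom_mean_le_arith_mean2_weighted ha.le hb₀.le (div_nonneg hu₀ ha.le)
            (div_nonneg hv hb₀.le) (by ring)
      _ = 1 := by field_simp; ring
  rwa [div_rpow hu₀ ha.le, div_rpow hv hb₀.le, div_mul_div_comm,
    div_le_one (by positivity)] at amgm

theorem isGreatest_rpow_sub_mul_one_sub_rpow {d p : ℝ} (hd : 0 < d) (hdp : d < p) :
    IsGreatest {u | ∃ t ∈ Set.Icc (0 : ℝ) 1, u = t ^ (p - d) * (1 - t ^ p) ^ (d / p)}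
      ((1 - d / p) ^ ((p - d) / p) * (d / p) ^ (d / p)) := by
  have hp : 0 < p := hd.trans hdp
  have hb₀ : 0 < d / p := div_pos hd hp
  have hb₁ : d / p < 1 := (div_lt_one hp).2 hdp
  have hexp : (p - d) / p = 1 - d / p := by field_simp
  have hpow (t : ℝ) (ht : 0 ≤ t) : t ^ (p - d) = (t ^ p) ^ (1 - d / p) := by
    rw [← rpow_mul ht, ← hexp, mul_div_cancel₀ _ hp.ne']
  rw [hexp]
  refine ⟨⟨(1 - d / p) ^ p⁻¹,
    ⟨by positivity, rpow_le_one (by linarith) (by linarith) (by positivity)⟩, ?_⟩, ?_⟩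
  · rw [hpow _ (by positivity), rpow_inv_rpow (by linarith) hp.ne', sub_sub_cancel]
  · rintro _ ⟨t, ⟨ht₀, ht₁⟩, rfl⟩
    rw [hpow t ht₀]
    exact rpow_one_sub_mul_one_sub_rpow_le hb₀ hb₁ (rpow_nonneg ht₀ p)
      (rpow_le_one ht₀ ht₁ hp.le)

end Real

section Homogeneous

variable {ι : Type*} {g : (ι → ℝ) → ℝ} {d p μ : ℝ}

def IsNonnegHomogeneous (d : ℝ) (g : (ι → ℝ) → ℝ) : Prop :=
  ∀ t : ℝ, 0 ≤ t → ∀ z : ι → ℝ, (∀ i, 0 ≤ z i) → g (t • z) = t ^ d * g z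

lemma IsNonnegHomogeneous.apply_zero (hg : IsNonnegHomogeneous d g) (hd : d ≠ 0) :
    g 0 = 0 := by
  simpa [Real.zero_rpow hd] using hg 0 le_rfl 0 fun _ => le_rfl

variable [Fintype ι]

lemma sum_smul_rpow {c : ℝ} (hc : 0 ≤ c) {z : ι → ℝ} (hz : ∀ i, 0 ≤ z i) (p : ℝ) :
    ∑ i, (c • z) i ^ p = c ^ p * ∑ i, z i ^ p := by
  rw [mul_sum]
  exact sum_congr rfl fun i _ => Real.mul_rpow hc (hz i)

lemma eq_zero_of_sum_rpow_eq_zero (hp : p ≠ 0) {z : ι → ℝ} (hz : ∀ i, 0 ≤ z i)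
    (h : ∑ i, z i ^ p = 0) : z = 0 := by
  funext i
  refine (Real.rpow_eq_zero (hz i) hp).1 ?_
  exact (sum_eq_zero_iff_of_nonneg fun j _ => Real.rpow_nonneg (hz j) p).1 h i (mem_univ i)

lemma le_sum_rpow_rpow_mul_of_homogeneous (hp : 0 < p) (hd : d ≠ 0)
    (hg : IsNonnegHomogeneous d g)
    (hμ : μ ∈ upperBounds {t | ∃ z : ι → ℝ,
      (∀ i, 0 ≤ z i) ∧ (∑ i, z i ^ p) ^ (1 / p) ≤ 1 ∧ t = g z})
    {z : ι → ℝ} (hz : ∀ i, 0 ≤ z i) :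
    g z ≤ (∑ i, z i ^ p) ^ (d / p) * μ := by
  set S := ∑ i, z i ^ p
  have hS₀ : 0 ≤ S := sum_nonneg fun i _ => Real.rpow_nonneg (hz i) p
  rcases hS₀.eq_or_lt with hS | hS
  · rw [eq_zero_of_sum_rpow_eq_zero hp.ne' hz hS.symm, hg.apply_zero hd, ← hS,
      Real.zero_rpow (div_ne_zero hd hp.ne'), zero_mul]
  set r := S ^ p⁻¹
  have hr : 0 < r := by positivity
  have hz' : ∀ i, 0 ≤ (r⁻¹ • z) i := fun i => mul_nonneg (inv_nonneg.2 hr.le) (hz i)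
  have hunit : ∑ i, (r⁻¹ • z) i ^ p = 1 := by
    rw [sum_smul_rpow (inv_nonneg.2 hr.le) hz, Real.inv_rpow hr.le,
      Real.rpow_inv_rpow hS.le hp.ne', inv_mul_cancel₀ hS.ne']
  calc g z = r ^ d * g (r⁻¹ • z) := by
        rw [← hg r hr.le _ hz', smul_inv_smul₀ hr.ne']
    _ ≤ r ^ d * μ :=
        mul_le_mul_of_nonneg_left (hμ ⟨_, hz', by rw [hunit, Real.one_rpow], rfl⟩)
          (by positivity)
    _ = S ^ (d / p) * μ := by rw [← Real.rpow_mul hS.le, inv_mul_eq_div]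

lemma rpow_sub_mul_le_of_homogeneous (hd : 0 < d) (hp : 0 < p)
    (hg : IsNonnegHomogeneous d g)
    (hμ : μ ∈ upperBounds {t | ∃ z : ι → ℝ,
      (∀ i, 0 ≤ z i) ∧ (∑ i, z i ^ p) ^ (1 / p) ≤ 1 ∧ t = g z})
    {α : ℝ} (hα : α ∈ upperBounds
      {u | ∃ t ∈ Set.Icc (0 : ℝ) 1, u = t ^ (p - d) * (1 - t ^ p) ^ (d / p)})
    {z : ι → ℝ} {s : ℝ} (hz : ∀ i, 0 ≤ z i) (hs : 0 ≤ s)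
    (hball : ((∑ i, z i ^ p) + s ^ p) ^ (1 / p) ≤ 1) :
    s ^ (p - d) * g z ≤ α * μ := by
  have hS : 0 ≤ ∑ i, z i ^ p := sum_nonneg fun i _ => Real.rpow_nonneg (hz i) p
  have hsum := (Real.rpow_one_div_le_one_iff (by positivity) hp).1 hball
  have hs₁ : s ≤ 1 := (Real.rpow_le_rpow_iff hs zero_le_one hp).1 (by
    rw [Real.one_rpow]; linarith)
  have hμ₀ : 0 ≤ μ := hμ ⟨0, fun _ => le_rfl, by simp [Real.zero_rpow, hp.ne'],
    (hg.apply_zero hd.ne').symm⟩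
  calc s ^ (p - d) * g z ≤ s ^ (p - d) * ((∑ i, z i ^ p) ^ (d / p) * μ) := by
        gcongr; exact le_sum_rpow_rpow_mul_of_homogeneous hp hd.ne' hg hμ hz
    _ ≤ s ^ (p - d) * (1 - s ^ p) ^ (d / p) * μ := by
        rw [← mul_assoc]; gcongr; linarith
    _ ≤ α * μ := by gcongr; exact hα ⟨s, ⟨hs, hs₁⟩, rfl⟩

lemma rpow_sub_mul_one_sub_rpow_mul_mem_of_homogeneous (hp : 0 < p)
    (hg : IsNonnegHomogeneous d g)
    {z : ι → ℝ} (hz : ∀ i, 0 ≤ z i) (hball : (∑ i, z i ^ p) ^ (1 / p) ≤ 1)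
    {t : ℝ} (ht₀ : 0 ≤ t) (ht₁ : t ≤ 1) :
    t ^ (p - d) * (1 - t ^ p) ^ (d / p) * g z ∈ {u | ∃ z : ι → ℝ, ∃ s : ℝ,
      (∀ i, 0 ≤ z i) ∧ 0 ≤ s ∧ ((∑ i, z i ^ p) + s ^ p) ^ (1 / p) ≤ 1 ∧
        u = s ^ (p - d) * g z} := by
  have hv : 0 ≤ 1 - t ^ p := sub_nonneg.2 (Real.rpow_le_one ht₀ ht₁ hp.le)
  have hS : 0 ≤ ∑ i, z i ^ p := sum_nonneg fun i _ => Real.rpow_nonneg (hz i) p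
  have hS₁ := (Real.rpow_one_div_le_one_iff hS hp).1 hball
  have hc : 0 ≤ (1 - t ^ p) ^ p⁻¹ := by positivity
  refine ⟨(1 - t ^ p) ^ p⁻¹ • z, t, fun i => mul_nonneg hc (hz i), ht₀, ?_, ?_⟩
  · rw [sum_smul_rpow hc hz, Real.rpow_inv_rpow hv hp.ne',
      Real.rpow_one_div_le_one_iff (by positivity) hp]
    nlinarith
  · rw [hg _ hc z hz, ← Real.rpow_mul hv, inv_mul_eq_div]
    ring

end Homogeneous

theorem stmt19_general {n : ℕ} (d p : ℝ) (hd : 2 ≤ d) (hp : d + 1 ≤ p)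
    (g : (Fin (n + 1) → ℝ) → ℝ)
    (hghom : ∀ t : ℝ, 0 ≤ t → ∀ z : Fin (n + 1) → ℝ, (∀ i, 0 ≤ z i) →
      g (t • z) = t ^ d * g z)
    (μ : ℝ)
    (hμ : IsGreatest {t | ∃ z : Fin (n + 1) → ℝ,
      (∀ i, 0 ≤ z i) ∧ (∑ i, z i ^ p) ^ (1 / p) ≤ 1 ∧ t = g z} μ)
    (μt : ℝ)
    (hμt : IsGreatest {t | ∃ z : Fin (n + 1) → ℝ, ∃ s : ℝ,
      (∀ i, 0 ≤ z i) ∧ 0 ≤ s ∧ ((∑ i, z i ^ p) + s ^ p) ^ (1 / p) ≤ 1 ∧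
        t = s ^ (p - d) * g z} μt)
    (α : ℝ)
    (hα : IsGreatest
      {u | ∃ t ∈ Set.Icc (0 : ℝ) 1, u = t ^ (p - d) * (1 - t ^ p) ^ (d / p)} α) :
    μt = α * μ ∧ α = (1 - d / p) ^ ((p - d) / p) * (d / p) ^ (d / p) := by
  have hd₀ : 0 < d := by linarith
  have hp₀ : 0 < p := by linarith
  refine ⟨le_antisymm ?_ ?_,
    hα.unique (Real.isGreatest_rpow_sub_mul_one_sub_rpow hd₀ (by linarith))⟩
  · obtain ⟨z, s, hz, hs, hball, rfl⟩ := hμt.1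
    exact rpow_sub_mul_le_of_homogeneous hd₀ hp₀ hghom hμ.2 hα.2 hz hs hball
  · obtain ⟨z, hz, hball, rfl⟩ := hμ.1
    obtain ⟨t, ⟨ht₀, ht₁⟩, rfl⟩ := hα.1
    exact hμt.2
      (rpow_sub_mul_one_sub_rpow_mul_mem_of_homogeneous hp₀ hghom hz hball ht₀ ht₁)

theorem stmt19 {n : ℕ} (d p : ℝ) (hd : 2 ≤ d) (hp : d + 1 ≤ p)
    (g : (Fin (n + 1) → ℝ) → ℝ)
    (hgcont : ContinuousOn g {z | ∀ i, 0 ≤ z i})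
    (hgnonneg : ∀ z : Fin (n + 1) → ℝ, (∀ i, 0 ≤ z i) → 0 ≤ g z)
    (hghom : ∀ t : ℝ, 0 ≤ t → ∀ z : Fin (n + 1) → ℝ, (∀ i, 0 ≤ z i) →
      g (t • z) = t ^ d * g z)
    (hgne : ∃ z : Fin (n + 1) → ℝ, (∀ i, 0 ≤ z i) ∧ g z ≠ 0)
    (μ : ℝ)
    (hμ : IsGreatest {t | ∃ z : Fin (n + 1) → ℝ,
      (∀ i, 0 ≤ z i) ∧ (∑ i, z i ^ p) ^ (1 / p) ≤ 1 ∧ t = g z} μ)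
    (μt : ℝ)
    (hμt : IsGreatest {t | ∃ z : Fin (n + 1) → ℝ, ∃ s : ℝ,
      (∀ i, 0 ≤ z i) ∧ 0 ≤ s ∧ ((∑ i, z i ^ p) + s ^ p) ^ (1 / p) ≤ 1 ∧
        t = s ^ (p - d) * g z} μt)
    (α : ℝ)
    (hα : IsGreatest
      {u | ∃ t ∈ Set.Icc (0 : ℝ) 1, u = t ^ (p - d) * (1 - t ^ p) ^ (d / p)} α) :
    μt = α * μ ∧ α = (1 - d / p) ^ ((p - d) / p) * (d / p) ^ (d / p) :=
  stmt19_general d p hd hp g hghom μ hμ μt hμt α hα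
end
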